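/- Let m, n, d be integers with 2 ≤ m < n ≤ d and let ζ ∈ k be a primitive d-th root of unity. Let i₁, j₁, i₂, j₂ be integers with 0 ≤ i₁ ≤ m − 1, 0 ≤ j₁ ≤ i₁, 1 ≤ i₂ ≤ n − m, and i₂ ≤ j₂ ≤ m − 1 + i₂; assume d + i₂ ≥ i₁ + n + 1. If P ∈ k[x_1,…,x_m,y_1,…,y_n] is homogeneous of total degree d + i₂ − i₁ − n − 1 and satisfies ζ^{n+j₁−j₂} · σ_ζ(P) = P, then P = 0. -/
import Mathlib


open MvPolynomial

/-- The `k`-algebra endomorphism of `k[x_1,…,x_m,y_1,…,y_n]` fixing the `x` variables and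
scaling each `y` variable by `ζ`. -/
noncomputable def sigmaZeta (k : Type*) [Field k] (m n : ℕ) (ζ : k) :
    MvPolynomial (Fin m ⊕ Fin n) k →ₐ[k] MvPolynomial (Fin m ⊕ Fin n) k :=
  aeval (Sum.elim (fun i => X (Sum.inl i)) (fun j => ζ • X (Sum.inr j)))

lemma sigmaZeta_monomial (k : Type*) [Field k] (m n : ℕ) (ζ : k)
    (s : Fin m ⊕ Fin n →₀ ℕ) (a : k) :
    sigmaZeta k m n ζ (monomial s a) =
      monomial s (ζ ^ (∑ j : Fin n, s (Sum.inr j)) * a) := by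
  rw [sigmaZeta, aeval_monomial, monomial_eq]
  rw [Finsupp.prod_fintype _ _ (fun v => pow_zero _),
    Finsupp.prod_fintype _ _ (fun v => pow_zero _)]
  rw [Fintype.prod_sum_type, Fintype.prod_sum_type]
  simp only [Sum.elim_inl, Sum.elim_inr, smul_eq_C_mul, mul_pow, Finset.prod_mul_distrib,
    ← map_pow, ← map_prod, Finset.prod_pow_eq_pow_sum, algebraMap_eq]
  rw [C_mul]
  ring

lemma coeff_sigmaZeta (k : Type*) [Field k] (m n : ℕ) (ζ : k)
    (P : MvPolynomial (Fin m ⊕ Fin n) k) (s : Fin m ⊕ Fin n →₀ ℕ) :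
    coeff s (sigmaZeta k m n ζ P) = ζ ^ (∑ j : Fin n, s (Sum.inr j)) * coeff s P := by
  conv_lhs => rw [P.as_sum, map_sum]
  simp only [sigmaZeta_monomial, coeff_sum, coeff_monomial]
  rw [Finset.sum_ite_eq' P.support s (fun t => ζ ^ (∑ j : Fin n, t (Sum.inr j)) * coeff t P)]
  split_ifs with h
  · rfl
  · rw [notMem_support_iff.mp h, mul_zero]

/-- For `2 ≤ m < n ≤ d` and indices `0 ≤ i₁ ≤ m-1`, `0 ≤ j₁ ≤ i₁`, `1 ≤ i₂ ≤ n-m`,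
`i₂ ≤ j₂ ≤ m-1+i₂` with `d + i₂ ≥ i₁ + n + 1`: a homogeneous polynomial of degree
`d + i₂ - i₁ - n - 1` satisfying `ζ^{n+j₁-j₂} · σ_ζ(P) = P` is zero.  This is the vanishing
proving the semi-orthogonality `⟨A₂, A₃⟩`. -/
theorem semiorthogonality_A2_A3_vanishing (k : Type*) [Field k] (m n d : ℕ)
    (hm : 2 ≤ m) (hmn : m < n) (hnd : n ≤ d)
    (i₁ j₁ i₂ j₂ : ℕ)
    (hi₁ : i₁ ≤ m - 1) (hj₁ : j₁ ≤ i₁) (hi₂l : 1 ≤ i₂) (hi₂r : i₂ ≤ n - m)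
    (hj₂l : i₂ ≤ j₂) (hj₂r : j₂ ≤ m - 1 + i₂)
    (hd : i₁ + n + 1 ≤ d + i₂)
    (ζ : k) (hζ : IsPrimitiveRoot ζ d)
    (P : MvPolynomial (Fin m ⊕ Fin n) k)
    (hhom : P.IsHomogeneous (d + i₂ - i₁ - n - 1))
    (heig : ζ ^ (n + j₁ - j₂) • sigmaZeta k m n ζ P = P) :
    P = 0 := by
  ext s
  rw [coeff_zero]
  by_contra hc
  -- the y-degree of the monomial s
  set b : ℕ := ∑ j : Fin n, s (Sum.inr j) with hb
  -- b is at most the total degree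
  have hdeg : ∑ v ∈ s.support, s v = d + i₂ - i₁ - n - 1 := by
    have := hhom hc
    rw [← this]
    simp [Finsupp.weight_apply, Finsupp.sum]
  have hble : b ≤ d + i₂ - i₁ - n - 1 := by
    rw [← hdeg]
    calc b ≤ ∑ v : Fin m ⊕ Fin n, s v := by
          rw [Fintype.sum_sum_type]
          exact Nat.le_add_left _ _
      _ = ∑ v ∈ s.support, s v := by
          rw [Finset.sum_subset (Finset.subset_univ s.support)]
          intro x _ hx
          simpa using hx
  -- the eigenvalue equation at coefficient s
  have key : ζ ^ (n + j₁ - j₂ + b) * coeff s P = coeff s P := by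
    have := congrArg (coeff s) heig
    rw [coeff_smul, coeff_sigmaZeta, smul_eq_mul, ← mul_assoc, ← pow_add] at this
    exact this
  have hroot : ζ ^ (n + j₁ - j₂ + b) = 1 := by
    have h1 : (ζ ^ (n + j₁ - j₂ + b) - 1) * coeff s P = 0 := by
      rw [sub_mul, one_mul, key, sub_self]
    rcases mul_eq_zero.mp h1 with h | h
    · exact sub_eq_zero.mp h
    · exact absurd h hc
  have hdvd : d ∣ n + j₁ - j₂ + b := hζ.dvd_of_pow_eq_one _ hroot
  have hpos : 0 < n + j₁ - j₂ + b := by omega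
  have hge : d ≤ n + j₁ - j₂ + b := Nat.le_of_dvd hpos hdvd
  omega
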